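/- If X_1, ..., X_m ∈ M_n(ℂ) are accretive-dissipative, then ω(X_1 ∘ X_2 ∘ ⋯ ∘ X_m) ≤ 2^{m/2} ∏_{j=1}^m ω(X_j), where ∘ denotes the Hadamard product. -/

import Mathlib

/-!
Always `ω(A) ≤ ‖A‖`, and the spectral norm is submultiplicative for the Hadamard product: every
row of `A` and every column of `B` has `ℓ²`-norm at most `‖A‖`, resp. `‖B‖`, so Cauchy–Schwarz
row by row gives `‖(A ∘ B) x‖ ≤ ‖A‖ ‖B‖ ‖x‖`.

Conversely, write `A = H + iK` with `H, K ≥ 0`. Cauchy–Schwarz for the semi-inner products of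
`H` and `K`, followed by Cauchy–Schwarz in `ℝ²`, gives
`|⟨Ax, y⟩| ≤ ⟨(H + K)x, x⟩^{1/2} ⟨(H + K)y, y⟩^{1/2}`, while for a unit vector `x`
`⟨(H + K)x, x⟩ = Re⟨Ax, x⟩ + Im⟨Ax, x⟩ ≤ √2 |⟨Ax, x⟩| ≤ √2 ω(A)`. Hence `‖A‖ ≤ √2 ω(A)`, and
`ω(X₁ ∘ ⋯ ∘ Xₘ) ≤ ‖X₁ ∘ ⋯ ∘ Xₘ‖ ≤ ∏ ‖Xⱼ‖ ≤ 2^{m/2} ∏ ω(Xⱼ)`.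
-/

open Matrix Complex
open scoped ComplexOrder

/-- Hermitian real part `(X + Xᴴ)/2`. -/
noncomputable def reM {m : ℕ} (X : Matrix (Fin m) (Fin m) ℂ) : Matrix (Fin m) (Fin m) ℂ :=
  (1 / 2 : ℂ) • (X + Xᴴ)

/-- Hermitian imaginary part `(X - Xᴴ)/(2i)`. -/
noncomputable def imM {m : ℕ} (X : Matrix (Fin m) (Fin m) ℂ) : Matrix (Fin m) (Fin m) ℂ :=
  (-Complex.I / 2) • (X - Xᴴ)

/-- Numerical range `W(X) = {⟨Xx, x⟩ : ‖x‖ = 1}`. -/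
noncomputable def numRange {m : ℕ} (X : Matrix (Fin m) (Fin m) ℂ) : Set ℂ :=
  {z | ∃ x : EuclideanSpace ℂ (Fin m), ‖x‖ = 1 ∧ z = star (x : Fin m → ℂ) ⬝ᵥ X.mulVec x}

/-- Numerical radius `ω(X) = sup {|z| : z ∈ W(X)}`. -/
noncomputable def numRadius {m : ℕ} (X : Matrix (Fin m) (Fin m) ℂ) : ℝ :=
  sSup ((fun z : ℂ => ‖z‖) '' numRange X)

/-- The sector `S_α`. -/
def sector (α : ℝ) : Set ℂ := {z : ℂ | 0 < z.re ∧ |z.im| ≤ Real.tan α * z.re}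

/-- Operator norm of a matrix acting on Euclidean space. -/
noncomputable def opNorm {m : ℕ} (X : Matrix (Fin m) (Fin m) ℂ) : ℝ :=
  ‖Matrix.toEuclideanCLM (𝕜 := ℂ) X‖

open scoped Matrix.Norms.L2Operator MatrixOrder
open WithLp

lemma sq_norm_sum_mul_le {ι 𝕜 : Type*} [NormedDivisionRing 𝕜] (s : Finset ι) (f g : ι → 𝕜) :
    ‖∑ i ∈ s, f i * g i‖ ^ 2 ≤ (∑ i ∈ s, ‖f i‖ ^ 2) * ∑ i ∈ s, ‖g i‖ ^ 2 := by
  have h : ‖∑ i ∈ s, f i * g i‖ ≤ ∑ i ∈ s, ‖f i‖ * ‖g i‖ :=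
    (norm_sum_le _ _).trans_eq (by simp only [norm_mul])
  exact (pow_le_pow_left₀ (norm_nonneg _) h 2).trans (Finset.sum_mul_sq_le_sq_mul_sq _ _ _)

lemma Real.sqrt_mul_sqrt_add_sqrt_mul_sqrt_le {a b c d : ℝ} (ha : 0 ≤ a) (hb : 0 ≤ b)
    (hc : 0 ≤ c) (hd : 0 ≤ d) : √a * √c + √b * √d ≤ √(a + b) * √(c + d) := by
  simpa [Fin.sum_univ_two] using Real.sum_sqrt_mul_sqrt_le Finset.univ (f := ![a, b])
    (g := ![c, d]) (Fin.forall_fin_two.2 ⟨ha, hb⟩) (Fin.forall_fin_two.2 ⟨hc, hd⟩)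

lemma Complex.re_add_im_le_sqrt_two_mul_norm (z : ℂ) : z.re + z.im ≤ √2 * ‖z‖ := by
  rw [norm_eq_sqrt_sq_add_sq, ← Real.sqrt_mul zero_le_two]
  exact Real.le_sqrt_of_sq_le (by nlinarith [sq_nonneg (z.re - z.im)])

namespace Matrix

variable {ι κ : Type*} [Fintype ι] [Fintype κ] [DecidableEq κ]

lemma star_dotProduct_eq_inner (y : EuclideanSpace ℂ ι) (v : ι → ℂ) :
    star (ofLp y) ⬝ᵥ v = inner ℂ y (toLp 2 v) :=
  dotProduct_comm _ _

lemma sum_sq_norm_col_le_sq_l2_opNorm (A : Matrix ι κ ℂ) (k : κ) :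
    ∑ i, ‖A i k‖ ^ 2 ≤ ‖A‖ ^ 2 := by
  have h := A.l2_opNorm_mulVec (EuclideanSpace.single k 1)
  rw [EuclideanSpace.single, PiLp.norm_single, norm_one, mul_one] at h
  have h2 := pow_le_pow_left₀ (norm_nonneg _) h 2
  simpa [EuclideanSpace.norm_sq_eq, mulVec_single_one] using h2

lemma sum_sq_norm_row_le_sq_l2_opNorm [DecidableEq ι] (A : Matrix ι κ ℂ) (i : ι) :
    ∑ k, ‖A i k‖ ^ 2 ≤ ‖A‖ ^ 2 := by
  simpa [l2_opNorm_conjTranspose] using sum_sq_norm_col_le_sq_l2_opNorm Aᴴ i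

lemma l2_opNorm_hadamard_le [DecidableEq ι] (A B : Matrix ι κ ℂ) : ‖A ⊙ B‖ ≤ ‖A‖ * ‖B‖ := by
  rw [l2_opNorm_def]
  refine ContinuousLinearMap.opNorm_le_bound _ (by positivity) fun x => ?_
  rw [← sq_le_sq₀ (norm_nonneg _) (by positivity)]
  calc ‖toLp 2 ((A ⊙ B) *ᵥ ofLp x)‖ ^ 2 = ∑ i, ‖∑ k, A i k * (B i k * x k)‖ ^ 2 := by
        simp [EuclideanSpace.norm_sq_eq, mulVec, dotProduct, mul_assoc]
    _ ≤ ∑ i, (∑ k, ‖A i k‖ ^ 2) * ∑ k, ‖B i k * x k‖ ^ 2 :=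
        Finset.sum_le_sum fun i _ => sq_norm_sum_mul_le _ _ _
    _ ≤ ∑ i, ‖A‖ ^ 2 * ∑ k, ‖B i k * x k‖ ^ 2 := by
        gcongr with i; exact sum_sq_norm_row_le_sq_l2_opNorm A i
    _ = ‖A‖ ^ 2 * ∑ k, (∑ i, ‖B i k‖ ^ 2) * ‖x k‖ ^ 2 := by
        simp only [← Finset.mul_sum, Finset.sum_mul, norm_mul, mul_pow]
        rw [Finset.sum_comm]
    _ ≤ ‖A‖ ^ 2 * ∑ k, ‖B‖ ^ 2 * ‖x k‖ ^ 2 := by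
        gcongr with k; exact sum_sq_norm_col_le_sq_l2_opNorm B k
    _ = (‖A‖ * ‖B‖ * ‖x‖) ^ 2 := by
        simp only [← Finset.mul_sum, ← EuclideanSpace.norm_sq_eq]; ring

lemma l2_opNorm_hadamard_prod_le [DecidableEq ι] {α : Type*} {s : Finset α} (hs : s.Nonempty)
    (X : α → Matrix ι κ ℂ) :
    ‖of fun i k => ∏ j ∈ s, X j i k‖ ≤ ∏ j ∈ s, ‖X j‖ := by
  induction hs using Finset.Nonempty.cons_induction with
  | singleton a => simp only [Finset.prod_singleton]; exact le_rfl
  | cons a s ha hs ih =>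
    have h : (of fun i k => ∏ j ∈ s.cons a ha, X j i k) =
        X a ⊙ of fun i k => ∏ j ∈ s, X j i k := by
      ext; simp
    rw [h, Finset.prod_cons]
    exact (l2_opNorm_hadamard_le _ _).trans (by gcongr)

lemma norm_star_dotProduct_mulVec_le (A : Matrix ι κ ℂ) (x : EuclideanSpace ℂ κ)
    (y : EuclideanSpace ℂ ι) : ‖star (ofLp y) ⬝ᵥ A *ᵥ ofLp x‖ ≤ ‖A‖ * ‖x‖ * ‖y‖ := by
  rw [star_dotProduct_eq_inner]
  calc _ ≤ ‖y‖ * ‖toLp 2 (A *ᵥ ofLp x)‖ := norm_inner_le_norm _ _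
    _ ≤ ‖y‖ * (‖A‖ * ‖x‖) := by gcongr; exact A.l2_opNorm_mulVec x
    _ = ‖A‖ * ‖x‖ * ‖y‖ := by ring

lemma l2_opNorm_le_of_norm_star_dotProduct_mulVec_le (A : Matrix ι κ ℂ) {C : ℝ} (hC : 0 ≤ C)
    (h : ∀ (x : EuclideanSpace ℂ κ) (y : EuclideanSpace ℂ ι), ‖x‖ = 1 → ‖y‖ = 1 →
      ‖star (ofLp y) ⬝ᵥ A *ᵥ ofLp x‖ ≤ C) : ‖A‖ ≤ C := by
  rw [l2_opNorm_def]
  refine ContinuousLinearMap.opNorm_le_of_re_inner_le hC fun x y hx hy => ?_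
  calc _ ≤ ‖inner ℂ (toLp 2 (A *ᵥ ofLp x)) y‖ := Complex.re_le_norm _
    _ = ‖inner ℂ y (toLp 2 (A *ᵥ ofLp x))‖ := norm_inner_symm _ _
    _ ≤ C := star_dotProduct_eq_inner y _ ▸ h x y hx hy

lemma PosSemidef.norm_star_dotProduct_mulVec_le [DecidableEq ι] {H : Matrix ι ι ℂ}
    (hH : H.PosSemidef) (x y : ι → ℂ) :
    ‖star y ⬝ᵥ H *ᵥ x‖ ≤ √(star x ⬝ᵥ H *ᵥ x).re * √(star y ⬝ᵥ H *ᵥ y).re := by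
  obtain ⟨B, rfl⟩ := CStarAlgebra.nonneg_iff_eq_star_mul_self.mp hH.nonneg
  have hinner (u v : ι → ℂ) :
      star u ⬝ᵥ (star B * B) *ᵥ v = inner ℂ (toLp 2 (B *ᵥ u)) (toLp 2 (B *ᵥ v)) := by
    rw [EuclideanSpace.inner_toLp_toLp, ← mulVec_mulVec, dotProduct_mulVec, star_mulVec,
      star_eq_conjTranspose, dotProduct_comm]
  have hsqrt (v : ι → ℂ) : √(star v ⬝ᵥ (star B * B) *ᵥ v).re = ‖toLp 2 (B *ᵥ v)‖ := by
    rw [hinner, ← RCLike.re_to_complex, inner_self_eq_norm_sq, Real.sqrt_sq (norm_nonneg _)]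
  rw [hinner, hsqrt, hsqrt, mul_comm]
  exact norm_inner_le_norm _ _

end Matrix

section NumericalRadius

variable {n : ℕ}

lemma numRadius_nonneg (A : Matrix (Fin n) (Fin n) ℂ) : 0 ≤ numRadius A :=
  Real.sSup_nonneg <| by rintro _ ⟨z, -, rfl⟩; exact norm_nonneg z

lemma numRadius_le_l2_opNorm (A : Matrix (Fin n) (Fin n) ℂ) : numRadius A ≤ ‖A‖ := by
  refine Real.sSup_le ?_ (norm_nonneg A)
  rintro _ ⟨_, ⟨x, hx, rfl⟩, rfl⟩
  simpa [hx] using A.norm_star_dotProduct_mulVec_le x x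

lemma norm_star_dotProduct_mulVec_le_numRadius (A : Matrix (Fin n) (Fin n) ℂ)
    {x : EuclideanSpace ℂ (Fin n)} (hx : ‖x‖ = 1) :
    ‖star (ofLp x) ⬝ᵥ A *ᵥ ofLp x‖ ≤ numRadius A := by
  refine le_csSup ⟨‖A‖, ?_⟩ ⟨_, ⟨x, hx, rfl⟩, rfl⟩
  rintro _ ⟨_, ⟨y, hy, rfl⟩, rfl⟩
  simpa [hy] using A.norm_star_dotProduct_mulVec_le y y

lemma isHermitian_reM (A : Matrix (Fin n) (Fin n) ℂ) : (reM A).IsHermitian := by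
  simp [reM, IsHermitian, conjTranspose_smul, add_comm]

lemma isHermitian_imM (A : Matrix (Fin n) (Fin n) ℂ) : (imM A).IsHermitian := by
  rw [imM, IsHermitian, conjTranspose_smul, conjTranspose_sub, conjTranspose_conjTranspose,
    ← neg_sub, smul_neg, ← neg_smul]
  congr 1
  norm_num [Complex.ext_iff]

lemma reM_add_I_smul_imM (A : Matrix (Fin n) (Fin n) ℂ) : reM A + I • imM A = A := by
  ext i k
  simp only [reM, imM, Matrix.add_apply, Matrix.smul_apply, Matrix.sub_apply, smul_eq_mul]
  ring_nf
  rw [I_sq]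
  ring

lemma star_dotProduct_mulVec_eq_reM_add_I_mul_imM (A : Matrix (Fin n) (Fin n) ℂ)
    (u v : Fin n → ℂ) :
    star u ⬝ᵥ A *ᵥ v = star u ⬝ᵥ reM A *ᵥ v + I * (star u ⬝ᵥ imM A *ᵥ v) := by
  conv_lhs => rw [← reM_add_I_smul_imM A]
  rw [add_mulVec, smul_mulVec, dotProduct_add, dotProduct_smul, smul_eq_mul]

lemma re_reM_add_re_imM (A : Matrix (Fin n) (Fin n) ℂ) (x : Fin n → ℂ) :
    (star x ⬝ᵥ reM A *ᵥ x).re + (star x ⬝ᵥ imM A *ᵥ x).re =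
      (star x ⬝ᵥ A *ᵥ x).re + (star x ⬝ᵥ A *ᵥ x).im := by
  have hre := (isHermitian_reM A).im_star_dotProduct_mulVec_self x
  have him := (isHermitian_imM A).im_star_dotProduct_mulVec_self x
  simp only [RCLike.im_to_complex] at hre him
  simp [star_dotProduct_mulVec_eq_reM_add_I_mul_imM A x x, hre, him]

theorem l2_opNorm_le_sqrt_two_mul_numRadius (A : Matrix (Fin n) (Fin n) ℂ)
    (hre : (reM A).PosSemidef) (him : (imM A).PosSemidef) : ‖A‖ ≤ √2 * numRadius A := by
  set q : Matrix (Fin n) (Fin n) ℂ → (Fin n → ℂ) → ℝ := fun H v => (star v ⬝ᵥ H *ᵥ v).re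
  have hform (x : EuclideanSpace ℂ (Fin n)) (hx : ‖x‖ = 1) :
      q (reM A) x + q (imM A) x ≤ √2 * numRadius A :=
    calc q (reM A) x + q (imM A) x = (star x ⬝ᵥ A *ᵥ x).re + (star x ⬝ᵥ A *ᵥ x).im :=
          re_reM_add_re_imM A x
      _ ≤ √2 * ‖star x ⬝ᵥ A *ᵥ x‖ := Complex.re_add_im_le_sqrt_two_mul_norm _
      _ ≤ √2 * numRadius A := by gcongr; exact norm_star_dotProduct_mulVec_le_numRadius A hx
  have hq_nonneg {H : Matrix (Fin n) (Fin n) ℂ} (hH : H.PosSemidef) (v : Fin n → ℂ) :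
      0 ≤ q H v :=
    hH.re_dotProduct_nonneg v
  have hC : 0 ≤ √2 * numRadius A := mul_nonneg (Real.sqrt_nonneg 2) (numRadius_nonneg A)
  refine l2_opNorm_le_of_norm_star_dotProduct_mulVec_le A hC fun x y hx hy => ?_
  calc ‖star (ofLp y) ⬝ᵥ A *ᵥ ofLp x‖
      ≤ ‖star (ofLp y) ⬝ᵥ reM A *ᵥ ofLp x‖ + ‖star (ofLp y) ⬝ᵥ imM A *ᵥ ofLp x‖ := by
        rw [star_dotProduct_mulVec_eq_reM_add_I_mul_imM]
        exact (norm_add_le _ _).trans_eq (by rw [norm_mul, norm_I, one_mul])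
    _ ≤ √(q (reM A) x) * √(q (reM A) y) + √(q (imM A) x) * √(q (imM A) y) :=
        add_le_add (hre.norm_star_dotProduct_mulVec_le _ _) (him.norm_star_dotProduct_mulVec_le _ _)
    _ ≤ √(q (reM A) x + q (imM A) x) * √(q (reM A) y + q (imM A) y) :=
        Real.sqrt_mul_sqrt_add_sqrt_mul_sqrt_le (hq_nonneg hre _) (hq_nonneg him _)
          (hq_nonneg hre _) (hq_nonneg him _)
    _ ≤ √(√2 * numRadius A) * √(√2 * numRadius A) := by
        gcongr
        exacts [hform x hx, hform y hy]
    _ = √2 * numRadius A := Real.mul_self_sqrt hC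

end NumericalRadius

theorem numRadius_hadamard_prod_le_of_accretiveDissipative {n m : ℕ} (hm : 0 < m)
    (X : Fin m → Matrix (Fin n) (Fin n) ℂ)
    (h₁ : ∀ j, (reM (X j)).PosDef) (h₂ : ∀ j, (imM (X j)).PosDef) :
    numRadius (Matrix.of fun i k => ∏ j : Fin m, X j i k) ≤
      (2 : ℝ) ^ ((m : ℝ) / 2) * ∏ j : Fin m, numRadius (X j) := by
  have hX (j : Fin m) : ‖X j‖ ≤ √2 * numRadius (X j) :=
    l2_opNorm_le_sqrt_two_mul_numRadius (X j) (h₁ j).posSemidef (h₂ j).posSemidef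
  calc numRadius (Matrix.of fun i k => ∏ j : Fin m, X j i k)
      ≤ ‖Matrix.of fun i k => ∏ j : Fin m, X j i k‖ := numRadius_le_l2_opNorm _
    _ ≤ ∏ j, ‖X j‖ := l2_opNorm_hadamard_prod_le (Finset.univ_nonempty_iff.2 ⟨⟨0, hm⟩⟩) X
    _ ≤ ∏ j, (√2 * numRadius (X j)) :=
        Finset.prod_le_prod (fun _ _ => norm_nonneg _) fun j _ => hX j
    _ = (2 : ℝ) ^ ((m : ℝ) / 2) * ∏ j, numRadius (X j) := by
        rw [Finset.prod_mul_distrib, Finset.prod_const, Finset.card_univ, Fintype.card_fin,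
          Real.rpow_div_two_eq_sqrt _ zero_le_two, Real.rpow_natCast]
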